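/- Let $\mu$ be any finite counting measure on $[0,\infty)$ that solves $\mu\circ\theta = \tau_\xi(\mu + \delta_\sigma)$ a.s. in the ergodic Palm setting. Then its largest atom $Z(\mu)$ (with $Z(\mathbf{0})=0$) satisfies $Z(\mu)\circ\theta = [\max\{Z(\mu),\sigma\} - \xi]^+$ almost surely, and hence $Z(\mu) = L$ a.s., where $L = [\sup_{j\ge 1}(\sigma_{-j}-\sum_{i=1}^j \xi_{-i})]^+$. -/

import Mathlib

/-!
The equation `μ ∘ θ = τ_ξ (μ + δ_σ)` says that the atoms of `μ ∘ θ` are the atoms of `μ + δ_σ`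
lying above `ξ`, shifted down by `ξ`; so the largest atom `Z` obeys Lindley's recursion
`Z ∘ θ = [max {Z, σ} - ξ]⁺`. Unrolling the recursion along the backward orbit bounds every term
of the Loynes supremum by `Z`, so `L ≤ Z`, and `L` obeys the same recursion. The recursion is
1-Lipschitz in `Z`, so `Z - L ≥ 0` can only decrease along `θ`; as `θ` preserves `P` it is then
invariant, hence an a.s. constant `c` by ergodicity. If `c > 0`, both solutions are in the linear
regime, `L ∘ θ = L - ξ`, which a stationary `L` cannot satisfy when `ξ > 0`.
-/

open MeasureTheory Filter Topology

/-- The shift-and-truncate operator `τ_y`. -/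
noncomputable def tau (y : ℝ) (μ : Measure ℝ) : Measure ℝ :=
  (μ.restrict (Set.Ioi y)).map (fun t => t - y)

/-- The largest atom of a finite counting measure represented by its (finite) set of
atoms; by the junk-value convention `sSup ∅ = 0` in `ℝ`, we get `Z(𝟎) = 0`. -/
noncomputable def Zfin (s : Finset ℝ) : ℝ := sSup (↑s : Set ℝ)

/-- The Loynes variable `L`. -/
noncomputable def Lfun {Ω : Type*} (θinv : Ω → Ω) (σ ξ : Ω → ℝ) (ω : Ω) : ℝ :=
  max (⨆ j : ℕ, (σ (θinv^[j + 1] ω) - ∑ i ∈ Finset.range (j + 1), ξ (θinv^[i + 1] ω))) 0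

lemma ciSup_nat_eq_max_ciSup_succ {α : Type*} [ConditionallyCompleteLinearOrder α] {u : ℕ → α}
    (hu : BddAbove (Set.range fun j => u (j + 1))) :
    ⨆ j, u j = max (u 0) (⨆ j, u (j + 1)) := by
  obtain ⟨b, hb⟩ := id hu
  have hu' : BddAbove (Set.range u) := by
    refine ⟨max (u 0) b, ?_⟩
    rintro _ ⟨_ | j, rfl⟩
    exacts [le_max_left _ _, le_max_of_le_right (hb ⟨j, rfl⟩)]
  refine le_antisymm (ciSup_le fun j => ?_)
    (max_le (le_ciSup hu' 0) (ciSup_le fun j => le_ciSup hu' (j + 1)))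
  rcases j with _ | j
  exacts [le_max_left _ _, le_max_of_le_right (le_ciSup hu j)]

def loynesStep (c d x : ℝ) : ℝ := max (max x c - d) 0

lemma le_loynesStep (c d x : ℝ) : max x c - d ≤ loynesStep c d x := le_max_left _ _

lemma loynesStep_nonneg (c d x : ℝ) : 0 ≤ loynesStep c d x := le_max_right _ _

lemma loynesStep_sub_loynesStep_le {c d x y : ℝ} (h : y ≤ x) :
    loynesStep c d x - loynesStep c d y ≤ x - y := by
  unfold loynesStep
  simp only [max_def]
  split_ifs <;> linarith

lemma loynesStep_eq_sub_of_add {c d x e : ℝ} (he : 0 < e)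
    (h : loynesStep c d (x + e) = loynesStep c d x + e) : loynesStep c d x = x - d := by
  unfold loynesStep at h ⊢
  simp only [max_def] at h ⊢
  split_ifs at h ⊢ <;> linarith

lemma max_sub_sum_le_of_loynesStep {z s x : ℕ → ℝ}
    (h : ∀ j, z j = loynesStep (s j) (x j) (z (j + 1))) (j : ℕ) :
    max (z (j + 1)) (s j) - ∑ i ∈ Finset.range (j + 1), x i ≤ z 0 := by
  induction j with
  | zero => simpa [← h 0] using le_loynesStep (s 0) (x 0) (z 1)
  | succ j ih =>
    have hstep := le_loynesStep (s (j + 1)) (x (j + 1)) (z (j + 2))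
    rw [← h] at hstep
    rw [Finset.sum_range_succ]
    linarith [le_max_left (z (j + 1)) (s j)]

lemma sum_dirac_singleton_ne_zero_iff {α : Type*} [MeasurableSpace α]
    [MeasurableSingletonClass α] (A : Finset α) (y : α) :
    (∑ x ∈ A, Measure.dirac x) {y} ≠ 0 ↔ y ∈ A := by
  simp [Measure.finsetSum_apply, Finset.sum_eq_zero_iff]

lemma tau_apply_singleton (d : ℝ) (μ : Measure ℝ) (y : ℝ) :
    tau d μ {y} = if 0 < y then μ {y + d} else 0 := by
  rw [tau, Measure.map_apply (measurable_sub_const d) (measurableSet_singleton y),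
    Measure.restrict_apply' measurableSet_Ioi]
  have hpre : (fun t => t - d) ⁻¹' {y} = {y + d} := by ext t; simp [sub_eq_iff_eq_add]
  rw [hpre]
  split_ifs with hy
  · rw [Set.inter_eq_left.2 (by simpa using hy)]
  · rw [Set.singleton_inter_eq_empty.2 (by simpa using hy), measure_empty]

lemma mem_iff_of_sum_dirac_eq_tau {A B : Finset ℝ} {c d : ℝ}
    (h : ∑ x ∈ A, Measure.dirac x = tau d (∑ x ∈ B, Measure.dirac x + Measure.dirac c))
    (y : ℝ) : y ∈ A ↔ 0 < y ∧ y + d ∈ insert c B := by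
  rw [← sum_dirac_singleton_ne_zero_iff, h, tau_apply_singleton]
  split_ifs with hy
  · rw [Measure.add_apply, Ne, add_eq_zero, not_and_or, ← Ne, ← Ne,
      sum_dirac_singleton_ne_zero_iff]
    simp [hy, Set.indicator_apply, eq_comm, or_comm]
  · simp [hy]

lemma isGreatest_Zfin {C : Finset ℝ} (hC : C.Nonempty) : IsGreatest (↑C : Set ℝ) (Zfin C) :=
  ⟨hC.csSup_mem, fun _ ha => le_csSup C.finite_toSet.bddAbove ha⟩

lemma Zfin_empty : Zfin ∅ = 0 := by simp [Zfin]

lemma Zfin_insert {B : Finset ℝ} {c : ℝ} (hc : 0 ≤ c) : Zfin (insert c B) = max (Zfin B) c := by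
  rcases B.eq_empty_or_nonempty with rfl | hB
  · simp [Zfin, hc]
  · rw [Zfin, Finset.coe_insert, csSup_insert B.finite_toSet.bddAbove hB, max_comm]
    rfl

lemma Zfin_eq_of_mem_iff {A C : Finset ℝ} (hC : C.Nonempty) {d : ℝ}
    (h : ∀ y, y ∈ A ↔ 0 < y ∧ y + d ∈ C) : Zfin A = max (Zfin C - d) 0 := by
  obtain ⟨hmem, hle⟩ := isGreatest_Zfin hC
  rcases le_or_gt (Zfin C) d with hm | hm
  · have hA : A = ∅ := Finset.eq_empty_of_forall_notMem fun y hy => by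
      have := (h y).1 hy
      linarith [hle this.2]
    rw [hA, Zfin_empty, max_eq_right (by linarith)]
  · rw [max_eq_left (by linarith)]
    refine IsGreatest.csSup_eq ⟨(h _).2 ⟨by linarith, by simpa using hmem⟩, fun y hy => ?_⟩
    linarith [hle ((h y).1 hy).2]

theorem Zfin_eq_loynesStep_of_sum_dirac_eq_tau {A B : Finset ℝ} {c d : ℝ} (hc : 0 ≤ c)
    (h : ∑ x ∈ A, Measure.dirac x = tau d (∑ x ∈ B, Measure.dirac x + Measure.dirac c)) :
    Zfin A = loynesStep c d (Zfin B) := by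
  rw [Zfin_eq_of_mem_iff (Finset.insert_nonempty c B) (mem_iff_of_sum_dirac_eq_tau h),
    Zfin_insert hc, loynesStep]

lemma MeasureTheory.MeasurePreserving.of_leftInverse {α β : Type*} [MeasurableSpace α]
    [MeasurableSpace β] {μ : Measure α} {ν : Measure β} {f : α → β} {g : β → α}
    (hf : MeasurePreserving f μ ν) (hg : Measurable g) (hgf : Function.LeftInverse g f) :
    MeasurePreserving g ν μ := by
  refine ⟨hg, ?_⟩
  rw [← hf.map_eq, Measure.map_map hg hf.measurable, hgf.comp_eq_id, Measure.map_id]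

section Dynamics

variable {Ω : Type*} [MeasurableSpace Ω] {P : Measure Ω} {θ : Ω → Ω}

-- Comparing integrals of the bounded function `arctan ∘ f` rules out a strict decrease.
lemma MeasureTheory.MeasurePreserving.ae_eq_comp_of_ae_comp_le [IsFiniteMeasure P]
    (hθ : MeasurePreserving θ P P) {f : Ω → ℝ} (hf : AEMeasurable f P) (h : f ∘ θ ≤ᵐ[P] f) :
    f ∘ θ =ᵐ[P] f := by
  have hg : AEStronglyMeasurable (Real.arctan ∘ f) P :=
    (Real.continuous_arctan.measurable.comp_aemeasurable hf).aestronglyMeasurable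
  have hint : Integrable (Real.arctan ∘ f) P :=
    .of_bound hg (Real.pi / 2) (.of_forall fun ω => by
      rw [Real.norm_eq_abs, abs_le]
      exact ⟨(Real.neg_pi_div_two_lt_arctan _).le, (Real.arctan_lt_pi_div_two _).le⟩)
  have hint_comp : Integrable (Real.arctan ∘ f ∘ θ) P := (hθ.integrable_comp hg).2 hint
  have heq : ∫ ω, (Real.arctan ∘ f) (θ ω) ∂P = ∫ ω, (Real.arctan ∘ f) ω ∂P := by
    rw [← integral_map hθ.aemeasurable (by rwa [hθ.map_eq]), hθ.map_eq]
  have hle : Real.arctan ∘ f ∘ θ ≤ᵐ[P] Real.arctan ∘ f :=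
    h.mono fun ω hω => Real.arctan_mono hω
  filter_upwards [(integral_eq_iff_of_ae_le hint_comp hint hle).1 heq] with ω hω
  exact Real.arctan_strictMono.injective hω

theorem ae_eq_of_loynesStep_of_ae_le [IsProbabilityMeasure P] (hθ : Ergodic θ P) {σ ξ Z L : Ω → ℝ}
    (hξ : ∀ᵐ ω ∂P, 0 < ξ ω) (hZ : AEMeasurable Z P) (hL : AEMeasurable L P)
    (hZθ : ∀ᵐ ω ∂P, Z (θ ω) = loynesStep (σ ω) (ξ ω) (Z ω))
    (hLθ : ∀ᵐ ω ∂P, L (θ ω) = loynesStep (σ ω) (ξ ω) (L ω)) (hLZ : L ≤ᵐ[P] Z) :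
    Z =ᵐ[P] L := by
  have hmp := hθ.toMeasurePreserving
  have hD : (Z - L) ∘ θ =ᵐ[P] Z - L := by
    refine hmp.ae_eq_comp_of_ae_comp_le (hZ.sub hL) ?_
    filter_upwards [hZθ, hLθ, hLZ] with ω hZω hLω hle
    simpa [hZω, hLω] using loynesStep_sub_loynesStep_le (c := σ ω) (d := ξ ω) hle
  obtain ⟨c, hc⟩ := hθ.ae_eq_const_of_ae_eq_comp_ae (hZ.sub hL).aestronglyMeasurable hD
  have hc0 : 0 ≤ c := by
    obtain ⟨ω, hle, hω⟩ := (hLZ.and hc).exists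
    simp only [Pi.sub_apply, Function.const_apply] at hω
    linarith
  suffices c = 0 by
    filter_upwards [hc] with ω hω
    simp only [Pi.sub_apply, Function.const_apply, this, sub_eq_zero] at hω
    exact hω
  by_contra hne
  have hcpos : 0 < c := lt_of_le_of_ne hc0 (Ne.symm hne)
  -- A positive constant gap `Z = L + c` forces both solutions into the linear regime.
  have hLdec : ∀ᵐ ω ∂P, L (θ ω) = L ω - ξ ω := by
    filter_upwards [hZθ, hLθ, hc, hmp.quasiMeasurePreserving.ae hc] with ω hZω hLω hcω hcθω
    simp only [Pi.sub_apply, Function.const_apply] at hcω hcθω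
    rw [hLω]
    refine loynesStep_eq_sub_of_add hcpos ?_
    rw [← hLω, show L ω + c = Z ω by linarith, ← hZω]
    linarith
  have hLinv : L ∘ θ =ᵐ[P] L := by
    refine hmp.ae_eq_comp_of_ae_comp_le hL ?_
    filter_upwards [hLdec, hξ] with ω hω hξω
    simp only [Function.comp_apply, hω]
    linarith
  obtain ⟨ω, hdec, hinv, hξω⟩ := (hLdec.and (hLinv.and hξ)).exists
  simp only [Function.comp_apply] at hinv
  linarith

end Dynamics

section Loynes

variable {Ω : Type*} (θinv : Ω → Ω) (σ ξ : Ω → ℝ)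

def loynesTerm (j : ℕ) (ω : Ω) : ℝ :=
  σ (θinv^[j + 1] ω) - ∑ i ∈ Finset.range (j + 1), ξ (θinv^[i + 1] ω)

lemma Lfun_eq_max_iSup_loynesTerm (ω : Ω) :
    Lfun θinv σ ξ ω = max (⨆ j, loynesTerm θinv σ ξ j ω) 0 := rfl

variable {θinv σ ξ}

lemma loynesTerm_le_of_loynesStep {Z : Ω → ℝ} {ω : Ω}
    (h : ∀ j, Z (θinv^[j] ω) =
      loynesStep (σ (θinv^[j + 1] ω)) (ξ (θinv^[j + 1] ω)) (Z (θinv^[j + 1] ω))) (j : ℕ) :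
    loynesTerm θinv σ ξ j ω ≤ Z ω :=
  (sub_le_sub_right (le_max_right _ _) _).trans
    (max_sub_sum_le_of_loynesStep (z := fun j => Z (θinv^[j] ω)) h j)

lemma Lfun_le_of_loynesStep {Z : Ω → ℝ} {ω : Ω}
    (h : ∀ j, Z (θinv^[j] ω) =
      loynesStep (σ (θinv^[j + 1] ω)) (ξ (θinv^[j + 1] ω)) (Z (θinv^[j + 1] ω))) :
    Lfun θinv σ ξ ω ≤ Z ω :=
  max_le (ciSup_le (loynesTerm_le_of_loynesStep h)) ((h 0).symm ▸ loynesStep_nonneg _ _ _)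

variable {θ : Ω → Ω}

lemma iterate_succ_apply_of_leftInverse (hli : Function.LeftInverse θinv θ) (n : ℕ) (ω : Ω) :
    θinv^[n + 1] (θ ω) = θinv^[n] ω := by
  rw [Function.iterate_succ_apply, hli ω]

lemma loynesTerm_zero_comp (hli : Function.LeftInverse θinv θ) (ω : Ω) :
    loynesTerm θinv σ ξ 0 (θ ω) = σ ω - ξ ω := by
  simp only [loynesTerm, iterate_succ_apply_of_leftInverse hli, zero_add, Finset.sum_range_one,
    Function.iterate_zero_apply]

lemma loynesTerm_succ_comp (hli : Function.LeftInverse θinv θ) (j : ℕ) (ω : Ω) :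
    loynesTerm θinv σ ξ (j + 1) (θ ω) = loynesTerm θinv σ ξ j ω - ξ ω := by
  simp only [loynesTerm, iterate_succ_apply_of_leftInverse hli]
  rw [Finset.sum_range_succ' _ (j + 1), Function.iterate_zero_apply]
  ring

lemma Lfun_comp_eq_loynesStep (hli : Function.LeftInverse θinv θ) {ω : Ω} (hσ : 0 ≤ σ ω)
    (hb : BddAbove (Set.range fun j => loynesTerm θinv σ ξ j ω)) :
    Lfun θinv σ ξ (θ ω) = loynesStep (σ ω) (ξ ω) (Lfun θinv σ ξ ω) := by
  have htail : (fun j => loynesTerm θinv σ ξ (j + 1) (θ ω)) =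
      fun j => loynesTerm θinv σ ξ j ω - ξ ω := funext (loynesTerm_succ_comp hli · ω)
  obtain ⟨b, hb'⟩ := id hb
  have htail_bdd : BddAbove (Set.range fun j => loynesTerm θinv σ ξ (j + 1) (θ ω)) := by
    rw [htail]
    exact ⟨b - ξ ω, by rintro _ ⟨j, rfl⟩; exact sub_le_sub_right (hb' ⟨j, rfl⟩) _⟩
  have htail_sup : ⨆ j, loynesTerm θinv σ ξ (j + 1) (θ ω) =
      (⨆ j, loynesTerm θinv σ ξ j ω) - ξ ω := by
    rw [htail]
    exact ((OrderIso.subRight (ξ ω)).map_ciSup hb).symm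
  rw [Lfun_eq_max_iSup_loynesTerm, Lfun_eq_max_iSup_loynesTerm,
    ciSup_nat_eq_max_ciSup_succ htail_bdd, htail_sup, loynesTerm_zero_comp hli, loynesStep]
  congr 1
  rw [max_assoc, max_eq_right hσ, max_comm, max_sub_sub_right]

lemma aemeasurable_Lfun [MeasurableSpace Ω] {P : Measure Ω}
    (hθinv : Measure.QuasiMeasurePreserving θinv P P) (hσ : AEMeasurable σ P)
    (hξ : AEMeasurable ξ P) : AEMeasurable (Lfun θinv σ ξ) P := by
  have hcomp : ∀ {f : Ω → ℝ}, AEMeasurable f P → ∀ n, AEMeasurable (fun ω => f (θinv^[n] ω)) P :=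
    fun hf n => hf.comp_quasiMeasurePreserving (hθinv.iterate n)
  exact (AEMeasurable.iSup fun j => (hcomp hσ _).sub
    (Finset.aemeasurable_fun_sum _ fun i _ => hcomp hξ _)).max aemeasurable_const

end Loynes

theorem stmt10_general {Ω : Type*} [MeasurableSpace Ω] (P : Measure Ω) [IsProbabilityMeasure P]
    (θ θinv : Ω → Ω) (hθ : Ergodic θ P) (hθinv : Measurable θinv)
    (hli : Function.LeftInverse θinv θ) (hri : Function.RightInverse θinv θ)
    (σ ξ : Ω → ℝ) (hσint : Integrable σ P) (hξint : Integrable ξ P)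
    (hσ0 : ∀ ω, 0 ≤ σ ω) (hξ0 : ∀ ω, 0 < ξ ω)
    (s : Ω → Finset ℝ)
    (hsmeas : Measurable fun ω => Zfin (s ω))
    (heq : ∀ᵐ ω ∂P,
      (∑ x ∈ s (θ ω), (Measure.dirac x : Measure ℝ)) =
        tau (ξ ω) ((∑ x ∈ s ω, (Measure.dirac x : Measure ℝ)) + Measure.dirac (σ ω))) :
    (∀ᵐ ω ∂P, Zfin (s (θ ω)) = max (max (Zfin (s ω)) (σ ω) - ξ ω) 0) ∧
    (∀ᵐ ω ∂P, Zfin (s ω) = Lfun θinv σ ξ ω) := by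
  have hZθ : ∀ᵐ ω ∂P, Zfin (s (θ ω)) = loynesStep (σ ω) (ξ ω) (Zfin (s ω)) := by
    filter_upwards [heq] with ω hω
    exact Zfin_eq_loynesStep_of_sum_dirac_eq_tau (hσ0 ω) hω
  refine ⟨hZθ, ?_⟩
  have hθinv_mp := hθ.toMeasurePreserving.of_leftInverse hθinv hli
  have hback : ∀ᵐ ω ∂P, ∀ j, Zfin (s (θinv^[j] ω)) = loynesStep (σ (θinv^[j + 1] ω))
      (ξ (θinv^[j + 1] ω)) (Zfin (s (θinv^[j + 1] ω))) := by
    refine ae_all_iff.2 fun j => ?_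
    filter_upwards [(hθinv_mp.iterate (j + 1)).quasiMeasurePreserving.ae hZθ] with ω hω
    have hθθinv : θ (θinv^[j + 1] ω) = θinv^[j] ω := by rw [Function.iterate_succ_apply', hri]
    rwa [hθθinv] at hω
  have hLθ : ∀ᵐ ω ∂P, Lfun θinv σ ξ (θ ω) = loynesStep (σ ω) (ξ ω) (Lfun θinv σ ξ ω) := by
    filter_upwards [hback] with ω hω
    exact Lfun_comp_eq_loynesStep hli (hσ0 ω)
      ⟨_, Set.forall_mem_range.2 (loynesTerm_le_of_loynesStep (Z := fun ω => Zfin (s ω)) hω)⟩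
  exact ae_eq_of_loynesStep_of_ae_le hθ (.of_forall hξ0) hsmeas.aemeasurable
    (aemeasurable_Lfun hθinv_mp.quasiMeasurePreserving hσint.aemeasurable hξint.aemeasurable)
    hZθ hLθ (hback.mono fun ω hω => Lfun_le_of_loynesStep (Z := fun ω => Zfin (s ω)) hω)

/-- If the finite counting measure with atom set `s ω` solves the stationarity equation
`μ ∘ θ = τ_ξ (μ + δ_σ)` a.s., then its largest atom `Z = Zfin ∘ s` satisfies
`Z ∘ θ = [max{Z,σ} - ξ]⁺` a.s., and hence `Z = L` a.s. -/
theorem stmt10 {Ω : Type*} [MeasurableSpace Ω] (P : Measure Ω) [IsProbabilityMeasure P]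
    (θ θinv : Ω → Ω) (hθ : Ergodic θ P) (hθinv : Measurable θinv)
    (hli : Function.LeftInverse θinv θ) (hri : Function.RightInverse θinv θ)
    (σ ξ : Ω → ℝ) (hσint : Integrable σ P) (hξint : Integrable ξ P)
    (hσ0 : ∀ ω, 0 ≤ σ ω) (hξ0 : ∀ ω, 0 < ξ ω)
    (s : Ω → Finset ℝ) (hs0 : ∀ ω, ∀ a ∈ s ω, 0 ≤ a)
    (hsmeas : Measurable fun ω => Zfin (s ω))
    (heq : ∀ᵐ ω ∂P,
      (∑ x ∈ s (θ ω), (Measure.dirac x : Measure ℝ)) =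
        tau (ξ ω) ((∑ x ∈ s ω, (Measure.dirac x : Measure ℝ)) + Measure.dirac (σ ω))) :
    (∀ᵐ ω ∂P, Zfin (s (θ ω)) = max (max (Zfin (s ω)) (σ ω) - ξ ω) 0) ∧
    (∀ᵐ ω ∂P, Zfin (s ω) = Lfun θinv σ ξ ω) :=
  stmt10_general P θ θinv hθ hθinv hli hri σ ξ hσint hξint hσ0 hξ0 s hsmeas heq
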